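/- arXiv:1712.00350 — 2 statements merged into one kernel-verified Lean document; each statement's English description precedes it below -/
import Mathlib

section
/- Testing weak optimality of x = 0 for interval LPs of the form min cᵀx s.t. Ax = 0, x ≥ 0 is equivalent to testing weak feasibility of the interval inequality system Aᵀy ≤ c with free variables y: x = 0 is weakly optimal iff the interval system {Aᵀy ≤ c : A ∈ 𝐀, c ∈ 𝐜} is weakly feasible. -/
/-!
For a fixed scenario `(A, c)`, `x = 0` is optimal exactly when `c ⬝ᵥ x ≥ 0` on the cone
`{x ≥ 0, A x = 0}`, and by Farkas' lemma this holds exactly when `Aᵀ y ≤ c` is feasible;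
so the same scenarios witness both sides. Farkas' lemma is proved by induction on the number of
generators: a functional separating `b` from all generators but `a₀`, and negative on `a₀`, is
repaired by projecting along `a₀` onto its kernel and applying the induction hypothesis there.
-/

open Matrix

theorem dotProduct_nonneg_of_vecMul_le {R m n : Type*} [Semiring R] [PartialOrder R]
    [IsOrderedRing R] [Fintype m] [Fintype n] {A : Matrix m n R} {c : n → R} {y : m → R}
    (hy : y ᵥ* A ≤ c) {x : n → R} (hx : 0 ≤ x) (hAx : A *ᵥ x = 0) : 0 ≤ c ⬝ᵥ x :=
  calc 0 = y ⬝ᵥ (A *ᵥ x) := by rw [hAx, dotProduct_zero]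
    _ = (y ᵥ* A) ⬝ᵥ x := dotProduct_mulVec y A x
    _ ≤ c ⬝ᵥ x := dotProduct_le_dotProduct_of_nonneg_right hy hx

section Farkas

variable {𝕜 M : Type*} [Field 𝕜] [LinearOrder 𝕜] [IsStrictOrderedRing 𝕜]
  [AddCommGroup M] [Module 𝕜 M]

lemma Module.exists_dual_apply_neg_of_ne_zero {b : M} (hb : b ≠ 0) :
    ∃ f : Module.Dual 𝕜 M, f b < 0 := by
  obtain ⟨f, hf⟩ := Module.Projective.exists_dual_eq_one 𝕜 hb
  exact ⟨-f, by simp [hf]⟩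

theorem exists_nonneg_sum_smul_eq_or_exists_dual_separating :
    ∀ {n : ℕ} (a : Fin n → M) (b : M),
      (∃ x : Fin n → 𝕜, 0 ≤ x ∧ ∑ i, x i • a i = b) ∨
        ∃ f : Module.Dual 𝕜 M, (∀ i, 0 ≤ f (a i)) ∧ f b < 0
  | 0, a, b => by
    by_cases hb : b = 0
    · exact .inl ⟨0, le_rfl, by simp [hb]⟩
    · obtain ⟨f, hf⟩ := Module.exists_dual_apply_neg_of_ne_zero (𝕜 := 𝕜) hb
      exact .inr ⟨f, fun i => i.elim0, hf⟩
  | n + 1, a, b => by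
    obtain ⟨x, hx, hsum⟩ | ⟨y, hy, hyb⟩ :=
      exists_nonneg_sum_smul_eq_or_exists_dual_separating (fun i => a i.succ) b
    · refine .inl ⟨Fin.cons 0 x, Fin.forall_fin_succ.2 ⟨le_rfl, hx⟩, ?_⟩
      simpa [Fin.sum_univ_succ] using hsum
    by_cases hy₀ : 0 ≤ y (a 0)
    · exact .inr ⟨y, Fin.forall_fin_succ.2 ⟨hy₀, hy⟩, hyb⟩
    push Not at hy₀
    -- Project along `a 0` onto the kernel of `y` and recurse.
    obtain ⟨μ, hμ, hsum⟩ | ⟨z, hz, hzb⟩ :=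
      exists_nonneg_sum_smul_eq_or_exists_dual_separating
        (fun i => y (a i.succ) • a 0 - y (a 0) • a i.succ) (y b • a 0 - y (a 0) • b)
    · set P := ∑ i, μ i * y (a i.succ)
      set S := ∑ i, μ i • a i.succ
      have hP : 0 ≤ P := Finset.sum_nonneg fun i _ => mul_nonneg (hμ i) (hy i)
      have hPS : ∑ i, μ i • (y (a i.succ) • a 0 - y (a 0) • a i.succ) =
          P • a 0 - y (a 0) • S := by
        rw [Finset.sum_smul, Finset.smul_sum, ← Finset.sum_sub_distrib]
        exact Finset.sum_congr rfl fun i _ => by module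
      refine .inl ⟨Fin.cons ((y (a 0))⁻¹ * (y b - P)) μ,
        Fin.forall_fin_succ.2 ⟨?_, hμ⟩, smul_right_injective M hy₀.ne ?_⟩
      · exact mul_nonneg_of_nonpos_of_nonpos (inv_nonpos.2 hy₀.le) (by linarith)
      · simp only [Fin.sum_univ_succ, Fin.cons_zero, Fin.cons_succ, smul_add, smul_smul,
          mul_inv_cancel_left₀ hy₀.ne]
        linear_combination (norm := module) -(hPS.symm.trans hsum)
    · have hw : ∀ v, (z (a 0) • y - y (a 0) • z) v = z (y v • a 0 - y (a 0) • v) := by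
        intro v
        simp only [LinearMap.sub_apply, LinearMap.smul_apply, map_sub, map_smul, smul_eq_mul]
        ring
      refine .inr
        ⟨z (a 0) • y - y (a 0) • z, Fin.forall_fin_succ.2 ⟨?_, fun i => ?_⟩, ?_⟩
      · simp [hw]
      · simpa only [hw] using hz i
      · simpa only [hw] using hzb

theorem exists_vecMul_le_of_forall_nonneg_dotProduct {m : Type*} [Fintype m] {n : ℕ}
    (A : Matrix m (Fin n) 𝕜) (c : Fin n → 𝕜)
    (h : ∀ x, 0 ≤ x → A *ᵥ x = 0 → 0 ≤ c ⬝ᵥ x) : ∃ y, y ᵥ* A ≤ c := by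
  classical
  -- Homogenize: separate `(0, -1)` from the columns `(Aⱼ, cⱼ)`.
  obtain ⟨x, hx, hsum⟩ | ⟨f, hf, hfb⟩ :=
    exists_nonneg_sum_smul_eq_or_exists_dual_separating (𝕜 := 𝕜)
      (fun j => ((fun i => A i j, c j) : (m → 𝕜) × 𝕜)) (0, -1)
  · have hAx : A *ᵥ x = 0 := by
      funext i
      simpa [mulVec, dotProduct, Prod.fst_sum, Finset.sum_apply, mul_comm] using
        congrFun (congrArg Prod.fst hsum) i
    have hcx : c ⬝ᵥ x = -1 := by
      simpa [dotProduct, Prod.snd_sum, mul_comm] using congrArg Prod.snd hsum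
    linarith [h x hx hAx]
  · set t := f (0, 1)
    set g := f ∘ₗ LinearMap.inl 𝕜 (m → 𝕜) 𝕜
    have hf_apply : ∀ v s, f (v, s) = g v + s * t := by
      intro v s
      rw [show ((v, s) : (m → 𝕜) × 𝕜) = (v, 0) + s • (0, 1) by simp, map_add,
        map_smul, smul_eq_mul, mul_comm]
      rfl
    have ht : 0 < t := by simpa [hf_apply] using hfb
    set e : m → m → 𝕜 := fun i j => if i = j then 1 else 0
    refine ⟨fun i => -g (e i) / t, fun j => ?_⟩
    have hj := hf j
    rw [hf_apply, LinearMap.pi_apply_eq_sum_univ] at hj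
    have hyA : ∑ i, -g (e i) / t * A i j = -(∑ i, A i j • g (e i)) / t := by
      rw [neg_div, Finset.sum_div, ← Finset.sum_neg_distrib]
      exact Finset.sum_congr rfl fun i _ => by rw [smul_eq_mul]; ring
    simp only [vecMul, dotProduct]
    rw [hyA, div_le_iff₀ ht]
    linarith

end Farkas

/-- Weak optimality of x = 0 for min cᵀx s.t. Ax = 0, x ≥ 0 over interval data
is equivalent to weak feasibility of the interval system Aᵀy ≤ c. -/
theorem zero_weakly_optimal_iff_weakly_feasible {k n : ℕ}
    (Alo Ahi : Matrix (Fin k) (Fin n) ℝ) (clo chi : Fin n → ℝ) :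
    (∃ (A : Matrix (Fin k) (Fin n) ℝ) (c : Fin n → ℝ),
      (∀ i j, Alo i j ≤ A i j ∧ A i j ≤ Ahi i j) ∧ (∀ j, clo j ≤ c j ∧ c j ≤ chi j) ∧
      ((0 : Fin n → ℝ) ≤ 0 ∧ A.mulVec 0 = 0) ∧
      (∀ x : Fin n → ℝ, 0 ≤ x → A.mulVec x = 0 →
        c ⬝ᵥ (0 : Fin n → ℝ) ≤ c ⬝ᵥ x)) ↔
    (∃ (A : Matrix (Fin k) (Fin n) ℝ) (c : Fin n → ℝ) (y : Fin k → ℝ),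
      (∀ i j, Alo i j ≤ A i j ∧ A i j ≤ Ahi i j) ∧ (∀ j, clo j ≤ c j ∧ c j ≤ chi j) ∧
      A.vecMul y ≤ c) := by
  constructor
  · rintro ⟨A, c, hA, hc, -, hopt⟩
    obtain ⟨y, hy⟩ := exists_vecMul_le_of_forall_nonneg_dotProduct A c fun x hx hAx => by
      simpa using hopt x hx hAx
    exact ⟨A, c, y, hA, hc, hy⟩
  · rintro ⟨A, c, y, hA, hc, hy⟩
    refine ⟨A, c, hA, hc, ⟨le_rfl, mulVec_zero A⟩, fun x hx hAx => ?_⟩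
    rw [dotProduct_zero]
    exact dotProduct_nonneg_of_vecMul_le hy hx hAx
end

section
/- Let the interval LP be min cᶠᵀxᶠ + cⁿᵀxⁿ subject to Bᶠxᶠ + Bⁿxⁿ ≥ b, xⁿ ≥ 0, with Bᶠ ∈ 𝐁ᶠ, Bⁿ ∈ 𝐁ⁿ, b ∈ 𝐛, cᶠ ∈ 𝐜ᶠ, cⁿ ∈ 𝐜ⁿ (inequality constraints only). If x = (xᶠ, xⁿ) is weakly optimal, then x is weakly feasible and there exist matrices B'ᶠ, B'ⁿ, vector b' and yⁿ ≥ 0 with B'ᶠᵢ ∈ yⁿᵢ·𝐁ᶠᵢ, B'ⁿᵢ ∈ yⁿᵢ·𝐁ⁿᵢ, b'ᵢ ∈ yⁿᵢ·𝐛ᵢ for each row i, satisfying B'ᶠxᶠ + B'ⁿxⁿ = b', (eᵀB'ᶠ)ᵀ ∈ 𝐜ᶠ, (eᵀB'ⁿ)ᵢ ∈ 𝐜ⁿᵢ whenever xⁿᵢ > 0, and (eᵀB'ⁿ)ᵢ ≤ c̄ⁿᵢ whenever xⁿᵢ = 0. -/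
/-!
A weakly optimal `x` is optimal for one fixed scenario `(Bᶠ, Bⁿ, b, cᶠ, cⁿ)`. The KKT conditions
of that linear program, obtained from Farkas' lemma, give multipliers `y ≥ 0`, vanishing on the
rows that are slack at `x`, with `yᵀBᶠ = cᶠ`, `yᵀBⁿ ≤ cⁿ`, and equality on the support of `xⁿ`.
Scaling row `i` of the scenario by `yᵢ` turns it into a solution `B'ᶠ, B'ⁿ, b'` of the testing
system: complementary slackness gives `B'ᶠxᶠ + B'ⁿxⁿ = b'`, and the column sums of `B'` are `yᵀB`.
-/

open Matrix Filter Topology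

section Farkas

variable {𝕜 α : Type*} [Field 𝕜] [LinearOrder 𝕜] [IsStrictOrderedRing 𝕜] [Fintype α]

lemma sub_div_smul_dotProduct (v w x z : α → 𝕜) (p : 𝕜) :
    (v - (v ⬝ᵥ x / p) • w) ⬝ᵥ z = v ⬝ᵥ (z - (w ⬝ᵥ z / p) • x) := by
  simp only [sub_dotProduct, dotProduct_sub, smul_dotProduct, dotProduct_smul, smul_eq_mul]
  ring

theorem farkas_alternative_fin (k : ℕ) (a : Fin k → α → 𝕜) (c : α → 𝕜) :
    (∃ t : Fin k → 𝕜, 0 ≤ t ∧ ∑ i, t i • a i = c) ∨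
      ∃ x, (∀ i, 0 ≤ a i ⬝ᵥ x) ∧ c ⬝ᵥ x < 0 := by
  induction k generalizing c with
  | zero =>
    by_cases hc : c = 0
    · exact .inl ⟨0, le_rfl, by simp [hc]⟩
    · refine .inr ⟨-c, finZeroElim, ?_⟩
      have hpos : 0 < c ⬝ᵥ c :=
        (Finset.sum_nonneg fun i _ => mul_self_nonneg (c i)).lt_of_ne'
          (dotProduct_self_eq_zero.not.2 hc)
      simpa using hpos
  | succ k ih =>
    rcases ih (a ∘ Fin.succ) c with ⟨t, ht, hc⟩ | ⟨x, hx, hcx⟩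
    · refine .inl ⟨Fin.cons 0 t, Fin.le_cons.2 ⟨le_rfl, ht⟩, ?_⟩
      simpa [Fin.sum_univ_succ] using hc
    by_cases hax : 0 ≤ a 0 ⬝ᵥ x
    · exact .inr ⟨x, Fin.forall_fin_succ.2 ⟨hax, hx⟩, hcx⟩
    set p := a 0 ⬝ᵥ x
    have hp : p < 0 := not_le.1 hax
    -- Project along `a 0` onto `{v | v ⬝ᵥ x = 0}`; `sub_div_smul_dotProduct` says its adjoint is
    -- `z ↦ z - (a 0 ⬝ᵥ z / p) • x`, which maps into `{z | a 0 ⬝ᵥ z = 0}`.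
    set π : (α → 𝕜) → α → 𝕜 := fun v => v - (v ⬝ᵥ x / p) • a 0
    rcases ih (fun i => π (a i.succ)) (π c) with ⟨t, ht, hc⟩ | ⟨z, hz, hcz⟩
    · set s := ∑ i, t i • a i.succ
      have hπs : π s = π c := by
        rw [← hc]
        simp [π, s, smul_sub, Finset.sum_sub_distrib, sum_dotProduct, smul_smul,
          Finset.sum_smul, Finset.sum_div, mul_div_assoc]
      have hsx : 0 ≤ s ⬝ᵥ x := by
        simp only [s, sum_dotProduct, smul_dotProduct, smul_eq_mul]
        exact Finset.sum_nonneg fun i _ => mul_nonneg (ht i) (hx i)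
      refine .inl ⟨Fin.cons ((c ⬝ᵥ x - s ⬝ᵥ x) / p) t,
        Fin.le_cons.2 ⟨div_nonneg_of_nonpos (by linarith) hp.le, ht⟩, ?_⟩
      rw [Fin.sum_univ_succ]
      simp only [Fin.cons_zero, Fin.cons_succ, π] at hπs ⊢
      linear_combination (norm := module) hπs
    · refine .inr ⟨z - (a 0 ⬝ᵥ z / p) • x, Fin.forall_fin_succ.2 ⟨?_, fun i => ?_⟩, ?_⟩
      · rw [← sub_div_smul_dotProduct, div_self hp.ne, one_smul, sub_self, zero_dotProduct]
      · rw [← sub_div_smul_dotProduct]; exact hz i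
      · rwa [← sub_div_smul_dotProduct]

theorem farkas_alternative {ι : Type*} [Fintype ι] (A : Matrix ι α 𝕜) (c : α → 𝕜) :
    (∃ y, 0 ≤ y ∧ y ᵥ* A = c) ∨ ∃ x, 0 ≤ A *ᵥ x ∧ c ⬝ᵥ x < 0 := by
  let e := Fintype.equivFin ι
  rcases farkas_alternative_fin _ (fun k => A (e.symm k)) c with ⟨t, ht, hc⟩ | ⟨x, hx, hcx⟩
  · refine .inl ⟨t ∘ e, fun i => ht (e i), ?_⟩
    rw [vecMul_eq_sum, ← hc, ← e.sum_comp]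
    simp
  · exact .inr ⟨x, fun i => by simpa [mulVec] using hx (e i), hcx⟩

end Farkas

lemma eventually_forall_nonneg_add_mul {ι : Type*} [Finite ι] {s g : ι → ℝ} (hs : 0 ≤ s)
    (hg : ∀ i, s i = 0 → 0 ≤ g i) : ∀ᶠ ε in 𝓝[>] 0, ∀ i, 0 ≤ s i + ε * g i := by
  refine eventually_all.2 fun i => ?_
  rcases (hs i).eq_or_lt with h | h
  · filter_upwards [self_mem_nhdsWithin] with ε hε
    rw [← h, Pi.zero_apply, zero_add]
    exact mul_nonneg (le_of_lt hε) (hg i h.symm)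
  · have : Tendsto (fun ε => s i + ε * g i) (𝓝 0) (𝓝 (s i)) :=
      (by fun_prop : Continuous fun ε => s i + ε * g i).tendsto' 0 (s i) (by simp)
    exact nhdsWithin_le_nhds ((this.eventually (lt_mem_nhds h)).mono fun _ => le_of_lt)

theorem exists_nonneg_vecMul_eq_of_isMinOn {ι α : Type*} [Fintype ι] [Fintype α]
    {A : Matrix ι α ℝ} {b : ι → ℝ} {c x : α → ℝ} (hx : b ≤ A *ᵥ x)
    (hmin : IsMinOn (c ⬝ᵥ ·) {x | b ≤ A *ᵥ x} x) :
    ∃ y, 0 ≤ y ∧ y ᵥ* A = c ∧ ∀ i, b i < (A *ᵥ x) i → y i = 0 := by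
  classical
  let tight : ι → ℝ := fun i => if b i < (A *ᵥ x) i then 0 else 1
  have htight : 0 ≤ tight := fun i => by dsimp only [tight]; split_ifs <;> norm_num
  rcases farkas_alternative (diagonal tight * A) c with ⟨y, hy, hyc⟩ | ⟨d, hd, hcd⟩
  · refine ⟨y * tight, mul_nonneg hy htight, ?_, fun i hi => by simp [tight, hi]⟩
    rwa [← vecMul_vecMul, show y ᵥ* diagonal tight = y * tight from
      funext (vecMul_diagonal y tight)] at hyc
  · -- `x + ε • d` stays feasible for small `ε > 0` and decreases the objective.
    have hslack : ∀ i, (A *ᵥ x - b) i = 0 → 0 ≤ (A *ᵥ d) i := fun i hi => by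
      have := hd i
      rw [Pi.sub_apply, sub_eq_zero] at hi
      simpa [← mulVec_mulVec, mulVec_diagonal, tight, hi] using this
    obtain ⟨ε, hfeas, hε⟩ := ((eventually_forall_nonneg_add_mul (sub_nonneg.2 hx) hslack).and
      self_mem_nhdsWithin).exists
    have hle : c ⬝ᵥ x ≤ c ⬝ᵥ (x + ε • d) := hmin fun i => by
      have := hfeas i
      simp only [Pi.sub_apply] at this
      simp only [mulVec_add, mulVec_smul, Pi.add_apply, Pi.smul_apply, smul_eq_mul]
      linarith
    rw [dotProduct_add, dotProduct_smul, smul_eq_mul, le_add_iff_nonneg_right] at hle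
    exact ((mul_neg_of_pos_of_neg hε hcd).not_ge hle).elim

theorem exists_dual_of_optimal_free_nonneg {ℓ m n : Type*} [Fintype ℓ] [Fintype m] [Fintype n]
    {Bf : Matrix ℓ m ℝ} {Bn : Matrix ℓ n ℝ} {b : ℓ → ℝ} {cf : m → ℝ} {cn : n → ℝ}
    {xf : m → ℝ} {xn : n → ℝ} (hfeas : b ≤ Bf *ᵥ xf + Bn *ᵥ xn) (hxn : 0 ≤ xn)
    (hopt : ∀ xf' xn', b ≤ Bf *ᵥ xf' + Bn *ᵥ xn' → 0 ≤ xn' →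
      cf ⬝ᵥ xf + cn ⬝ᵥ xn ≤ cf ⬝ᵥ xf' + cn ⬝ᵥ xn') :
    ∃ y, 0 ≤ y ∧ y ᵥ* Bf = cf ∧ y ᵥ* Bn ≤ cn ∧ (∀ j, 0 < xn j → (y ᵥ* Bn) j = cn j) ∧
      ∀ i, b i < (Bf *ᵥ xf + Bn *ᵥ xn) i → y i = 0 := by
  classical
  -- The sign constraints `0 ≤ xn` become the rows `[0 1]` of a single system `b ≤ A *ᵥ x`.
  let A := fromBlocks Bf Bn 0 (1 : Matrix n n ℝ)
  have hA : ∀ u v, Sum.elim b 0 ≤ A *ᵥ Sum.elim u v ↔ b ≤ Bf *ᵥ u + Bn *ᵥ v ∧ 0 ≤ v := by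
    simp [A, fromBlocks_mulVec]
  obtain ⟨w, hw, hwA, hslack⟩ := exists_nonneg_vecMul_eq_of_isMinOn (c := Sum.elim cf cn)
    ((hA xf xn).2 ⟨hfeas, hxn⟩) fun x' hx' => by
      obtain ⟨u, v, rfl⟩ : ∃ u v, x' = Sum.elim u v := ⟨_, _, (Sum.elim_comp_inl_inr x').symm⟩
      simpa [sumElim_dotProduct_sumElim] using hopt u v ((hA u v).1 hx').1 ((hA u v).1 hx').2
  simp only [A, vecMul_fromBlocks, vecMul_zero, vecMul_one, add_zero] at hwA
  have hcf : (w ∘ Sum.inl) ᵥ* Bf = cf := funext fun j => by simpa using congrFun hwA (.inl j)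
  have hcn : (w ∘ Sum.inl) ᵥ* Bn + w ∘ Sum.inr = cn :=
    funext fun j => by simpa using congrFun hwA (.inr j)
  refine ⟨w ∘ Sum.inl, fun i => hw _, hcf, hcn ▸ le_add_of_nonneg_right fun j => hw _,
    fun j hj => ?_, fun i hi => hslack (.inl i) (by simpa [A, fromBlocks_mulVec] using hi)⟩
  have : w (.inr j) = 0 := hslack (.inr j) (by simpa [A, fromBlocks_mulVec] using hj)
  simp [← hcn, this]

/-- Forward direction of Theorem 5: weak optimality implies weak feasibility plus
solvability of the scaled testing system. -/
theorem weakly_optimal_implies_testing_system {m n ℓ : ℕ}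
    (Bflo Bfhi : Matrix (Fin ℓ) (Fin m) ℝ) (Bnlo Bnhi : Matrix (Fin ℓ) (Fin n) ℝ)
    (blo bhi : Fin ℓ → ℝ) (cflo cfhi : Fin m → ℝ) (cnlo cnhi : Fin n → ℝ)
    (xf : Fin m → ℝ) (xn : Fin n → ℝ)
    -- weak optimality of (xf, xn):
    (hopt : ∃ (Bf : Matrix (Fin ℓ) (Fin m) ℝ) (Bn : Matrix (Fin ℓ) (Fin n) ℝ)
        (b : Fin ℓ → ℝ) (cf : Fin m → ℝ) (cn : Fin n → ℝ),
      (∀ i j, Bflo i j ≤ Bf i j ∧ Bf i j ≤ Bfhi i j) ∧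
      (∀ i j, Bnlo i j ≤ Bn i j ∧ Bn i j ≤ Bnhi i j) ∧
      (∀ i, blo i ≤ b i ∧ b i ≤ bhi i) ∧
      (∀ j, cflo j ≤ cf j ∧ cf j ≤ cfhi j) ∧
      (∀ j, cnlo j ≤ cn j ∧ cn j ≤ cnhi j) ∧
      (b ≤ Bf.mulVec xf + Bn.mulVec xn ∧ 0 ≤ xn) ∧
      (∀ (xf' : Fin m → ℝ) (xn' : Fin n → ℝ),
        b ≤ Bf.mulVec xf' + Bn.mulVec xn' → 0 ≤ xn' →
        cf ⬝ᵥ xf + cn ⬝ᵥ xn ≤ cf ⬝ᵥ xf' + cn ⬝ᵥ xn')) :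
    -- weak feasibility:
    (∃ (Bf : Matrix (Fin ℓ) (Fin m) ℝ) (Bn : Matrix (Fin ℓ) (Fin n) ℝ) (b : Fin ℓ → ℝ),
      (∀ i j, Bflo i j ≤ Bf i j ∧ Bf i j ≤ Bfhi i j) ∧
      (∀ i j, Bnlo i j ≤ Bn i j ∧ Bn i j ≤ Bnhi i j) ∧
      (∀ i, blo i ≤ b i ∧ b i ≤ bhi i) ∧
      b ≤ Bf.mulVec xf + Bn.mulVec xn ∧ 0 ≤ xn) ∧
    -- solvability of the scaled testing system:
    (∃ (Bf' : Matrix (Fin ℓ) (Fin m) ℝ) (Bn' : Matrix (Fin ℓ) (Fin n) ℝ)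
        (b' : Fin ℓ → ℝ) (yn : Fin ℓ → ℝ),
      0 ≤ yn ∧
      (∀ i j, yn i * Bflo i j ≤ Bf' i j ∧ Bf' i j ≤ yn i * Bfhi i j) ∧
      (∀ i j, yn i * Bnlo i j ≤ Bn' i j ∧ Bn' i j ≤ yn i * Bnhi i j) ∧
      (∀ i, yn i * blo i ≤ b' i ∧ b' i ≤ yn i * bhi i) ∧
      Bf'.mulVec xf + Bn'.mulVec xn = b' ∧
      (∀ j, cflo j ≤ ∑ i, Bf' i j ∧ ∑ i, Bf' i j ≤ cfhi j) ∧
      (∀ j, 0 < xn j → cnlo j ≤ ∑ i, Bn' i j ∧ ∑ i, Bn' i j ≤ cnhi j) ∧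
      (∀ j, xn j = 0 → ∑ i, Bn' i j ≤ cnhi j)) := by
  obtain ⟨Bf, Bn, b, cf, cn, hBf, hBn, hb, hcf, hcn, ⟨hfeas, hxn⟩, hmin⟩ := hopt
  refine ⟨⟨Bf, Bn, b, hBf, hBn, hb, hfeas, hxn⟩, ?_⟩
  obtain ⟨y, hy, hyf, hyn, hyn_eq, hslack⟩ := exists_dual_of_optimal_free_nonneg hfeas hxn hmin
  have hscale {a lo hi : ℝ} (i) (h : lo ≤ a ∧ a ≤ hi) : y i * lo ≤ y i * a ∧ y i * a ≤ y i * hi :=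
    ⟨mul_le_mul_of_nonneg_left h.1 (hy i), mul_le_mul_of_nonneg_left h.2 (hy i)⟩
  have hcol {k : ℕ} (B : Matrix (Fin ℓ) (Fin k) ℝ) (j) : ∑ i, (diagonal y * B) i j = (y ᵥ* B) j := by
    simp [vecMul, dotProduct]
  refine ⟨diagonal y * Bf, diagonal y * Bn, diagonal y *ᵥ b, y, hy,
    fun i j => by simpa using hscale i (hBf i j), fun i j => by simpa using hscale i (hBn i j),
    fun i => by simpa [mulVec_diagonal] using hscale i (hb i), ?_,
    fun j => by rw [hcol, hyf]; exact hcf j,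
    fun j hj => by rw [hcol, hyn_eq j hj]; exact hcn j,
    fun j _ => (hcol Bn j).trans_le ((hyn j).trans (hcn j).2)⟩
  ext i
  rw [← mulVec_mulVec, ← mulVec_mulVec, ← mulVec_add, mulVec_diagonal, mulVec_diagonal]
  rcases (hfeas i).eq_or_lt with h | h
  · rw [h]
  · rw [hslack i h, zero_mul, zero_mul]
end
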